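/- Let f : ℝ → ℝ be continuous with F(t) = ∫₀ᵗ f(τ) dτ. Suppose (i) there exist sequences (t_j), (t'_j) with t'_j → 0, 0 ≤ t_j < t'_j, and F(t_j) = sup_{[t_j,t'_j]} F; and (ii) there exists a sequence (ξ_j) ⊂ (0,∞) with ξ_j → 0 and F(ξ_j)/ξ_j² → +∞. Then f(0) = 0. -/
import Mathlib


open Filter Set

theorem stmt_2 (f : ℝ → ℝ) (hf : Continuous f)
    (F : ℝ → ℝ) (hF : ∀ t, F t = ∫ τ in (0:ℝ)..t, f τ)
    (t t' : ℕ → ℝ)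
    (ht : ∀ j, 0 ≤ t j ∧ t j < t' j)
    (ht' : Tendsto t' atTop (nhds 0))
    (hsup : ∀ j, ∀ s ∈ Icc (t j) (t' j), F s ≤ F (t j))
    (ξ : ℕ → ℝ) (hξpos : ∀ j, 0 < ξ j) (hξ0 : Tendsto ξ atTop (nhds 0))
    (hξ : Tendsto (fun j => F (ξ j) / (ξ j) ^ 2) atTop atTop) :
    f 0 = 0 := by
  by_contra h0
  rcases lt_or_gt_of_ne h0 with hneg | hpos
  · -- f 0 < 0 : contradicts F(ξ)/ξ² → ∞
    have hc : (0:ℝ) < -(f 0) / 2 := by linarith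
    obtain ⟨δ, hδ, hδf⟩ := Metric.continuousAt_iff.mp (hf.continuousAt (x := 0)) _ hc
    have h1 : ∀ᶠ j in atTop, |ξ j - 0| < δ :=
      (Metric.tendsto_nhds.mp hξ0) δ hδ
    have h2 : ∀ᶠ j in atTop, (0:ℝ) ≤ F (ξ j) / (ξ j) ^ 2 :=
      hξ.eventually_ge_atTop 0
    obtain ⟨j, hj1, hj2⟩ := (h1.and h2).exists
    have hξδ : ξ j < δ := by
      have := abs_lt.mp hj1; linarith [this.2]
    have hFle : F (ξ j) ≤ (ξ j) * (f 0 / 2) := by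
      rw [hF]
      calc ∫ τ in (0:ℝ)..(ξ j), f τ ≤ ∫ τ in (0:ℝ)..(ξ j), (f 0 / 2) := by
            apply intervalIntegral.integral_mono_on (hξpos j).le
              (hf.intervalIntegrable _ _) (intervalIntegrable_const)
            intro x hx
            have hx0 := hx.1
            have hx1 := hx.2
            have hxd : dist x 0 < δ := by
              rw [Real.dist_eq, sub_zero, abs_of_nonneg hx0]; linarith
            have := hδf hxd
            rw [Real.dist_eq] at this
            have := abs_lt.mp this
            linarith [this.2]
        _ = (ξ j) * (f 0 / 2) := by simp; ring
    have hFneg : F (ξ j) < 0 := by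
      have : (ξ j) * (f 0 / 2) < 0 :=
        mul_neg_of_pos_of_neg (hξpos j) (by linarith)
      linarith
    have : F (ξ j) / (ξ j) ^ 2 < 0 :=
      div_neg_of_neg_of_pos hFneg (pow_pos (hξpos j) 2)
    linarith
  · -- f 0 > 0 : contradicts the sup condition
    have hc : (0:ℝ) < f 0 / 2 := by linarith
    obtain ⟨δ, hδ, hδf⟩ := Metric.continuousAt_iff.mp (hf.continuousAt (x := 0)) _ hc
    have h1 : ∀ᶠ j in atTop, |t' j - 0| < δ :=
      (Metric.tendsto_nhds.mp ht') δ hδ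
    obtain ⟨j, hj1⟩ := h1.exists
    have ht'δ : t' j < δ := by
      have := abs_lt.mp hj1; linarith [this.2]
    obtain ⟨htj0, htjlt⟩ := ht j
    have hpos' : ∀ x ∈ Set.Ioo (t j) (t' j), 0 < f x := by
      intro x hx
      have hx0 : 0 ≤ x := le_trans htj0 hx.1.le
      have hxd : dist x 0 < δ := by
        rw [Real.dist_eq, sub_zero, abs_of_nonneg hx0]; linarith [hx.2]
      have := hδf hxd
      rw [Real.dist_eq] at this
      have := abs_lt.mp this
      linarith [this.1]
    have hint : 0 < ∫ τ in (t j)..(t' j), f τ :=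
      intervalIntegral.intervalIntegral_pos_of_pos_on
        (hf.intervalIntegrable _ _) hpos' htjlt
    have hdiff : F (t' j) - F (t j) = ∫ τ in (t j)..(t' j), f τ := by
      rw [hF, hF, intervalIntegral.integral_interval_sub_left
        (hf.intervalIntegrable _ _) (hf.intervalIntegrable _ _)]
    have := hsup j (t' j) ⟨htjlt.le, le_refl _⟩
    linarith
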